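/- arXiv:1403.2523 — 4 statements merged into one kernel-verified Lean document; each statement's English description precedes it below -/
import Mathlib

section
/- Original Opial inequality: Let a > 0 and f ∈ C¹[0,a] with f(0) = f(a) = 0 and f(t) > 0 on (0,a). Then ∫₀ᵃ |f(t) f′(t)| dt ≤ (a/4) ∫₀ᵃ (f′(t))² dt. -/
/-!
If `f l = 0`, the fundamental theorem of calculus gives `|f t| ≤ y t` with
`y t = ∫ s in l..t, |f' s|`, so `∫ₗʳ |f f'| ≤ ∫ₗʳ y y' = y(r)² / 2 ≤ (r - l) / 2 ∫ₗʳ f'²` by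
Cauchy–Schwarz. Splitting `[0, a]` at `a / 2`, this applies to the left half directly and to the
right half after the reflection `t ↦ -t`; each half has length `a / 2`.
-/

open intervalIntegral Set MeasureTheory

namespace intervalIntegral

theorem sq_integral_le_mul_integral_sq {h : ℝ → ℝ} {l r : ℝ} (hlr : l ≤ r)
    (h₁ : IntervalIntegrable h volume l r)
    (h₂ : IntervalIntegrable (fun t ↦ h t ^ 2) volume l r) :
    (∫ t in l..r, h t) ^ 2 ≤ (r - l) * ∫ t in l..r, h t ^ 2 := by
  rcases hlr.eq_or_lt with rfl | hlt
  · simp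
  set I := ∫ t in l..r, h t
  set m := I / (r - l)
  have hmI : m * (r - l) = I := div_mul_cancel₀ _ (sub_pos.2 hlt).ne'
  -- `m` is the mean of `h`, and the inequality is the nonnegativity of the variance about it.
  have hvar : 0 ≤ ∫ t in l..r, (h t - m) ^ 2 := integral_nonneg hlr fun t _ ↦ sq_nonneg _
  have hexpand : ∫ t in l..r, (h t - m) ^ 2
      = (∫ t in l..r, h t ^ 2) - 2 * m * I + (r - l) * m ^ 2 := by
    simp_rw [sub_sq]
    have h₁' : IntervalIntegrable (fun t ↦ 2 * h t * m) volume l r :=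
      (h₁.const_mul 2).mul_const m
    rw [integral_add (h₂.sub h₁') intervalIntegrable_const, integral_sub h₂ h₁', integral_const,
      integral_mul_const, integral_const_mul, smul_eq_mul]
    ring
  nlinarith

theorem continuousOn_primitive_of_continuousOn {g : ℝ → ℝ} {l r : ℝ} (hlr : l ≤ r)
    (hg : ContinuousOn g (Icc l r)) : ContinuousOn (fun t ↦ ∫ s in l..t, g s) (Icc l r) := by
  have hgi : IntegrableOn g (uIcc l r) := uIcc_of_le hlr ▸ hg.integrableOn_Icc
  exact uIcc_of_le hlr ▸ continuousOn_primitive_interval hgi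

theorem integral_primitive_mul_self {g : ℝ → ℝ} {l r : ℝ} (hlr : l ≤ r)
    (hg : ContinuousOn g (Icc l r)) :
    ∫ t in l..r, (∫ s in l..t, g s) * g t = (∫ t in l..r, g t) ^ 2 / 2 := by
  set y := fun t ↦ ∫ s in l..t, g s
  have hy : ContinuousOn y (uIcc l r) :=
    uIcc_of_le hlr ▸ continuousOn_primitive_of_continuousOn hlr hg
  have hy' : ∀ t ∈ Ioo (min l r) (max l r), HasDerivAt y (g t) t := by
    intro t ht
    rw [min_eq_left hlr, max_eq_right hlr] at ht
    exact integral_hasDerivAt_right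
      ((hg.mono (Icc_subset_Icc_right ht.2.le)).intervalIntegrable_of_Icc ht.1.le)
      (ContinuousOn.stronglyMeasurableAtFilter isOpen_Ioo (hg.mono Ioo_subset_Icc_self) t ht)
      ((hg t (Ioo_subset_Icc_self ht)).continuousAt (Icc_mem_nhds ht.1 ht.2))
  have hgi : IntervalIntegrable g volume l r := hg.intervalIntegrable_of_Icc hlr
  have hparts := integral_deriv_mul_eq_sub_of_hasDerivAt hy hy hy' hy' hgi hgi
  simp only [y, integral_same, mul_zero, sub_zero] at hparts
  simp_rw [mul_comm (g _), ← two_mul, integral_const_mul] at hparts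
  linarith

theorem abs_le_integral_abs_deriv_of_eq_zero {f f' : ℝ → ℝ} {l t : ℝ} (hlt : l ≤ t)
    (hderiv : ∀ s ∈ Icc l t, HasDerivAt f (f' s) s) (hf' : IntervalIntegrable f' volume l t)
    (hfl : f l = 0) :
    |f t| ≤ ∫ s in l..t, |f' s| := by
  have hftc := integral_eq_sub_of_hasDerivAt (fun s hs ↦ hderiv s (uIcc_of_le hlt ▸ hs)) hf'
  rw [hfl, sub_zero] at hftc
  exact hftc ▸ abs_integral_le_integral_abs hlt

theorem integral_abs_mul_deriv_le_of_left_eq_zero {f f' : ℝ → ℝ} {l r : ℝ} (hlr : l ≤ r)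
    (hderiv : ∀ t ∈ Icc l r, HasDerivAt f (f' t) t) (hf' : ContinuousOn f' (Icc l r))
    (hfl : f l = 0) :
    ∫ t in l..r, |f t * f' t| ≤ (r - l) / 2 * ∫ t in l..r, f' t ^ 2 := by
  have hf : ContinuousOn f (Icc l r) := fun t ht ↦ (hderiv t ht).continuousAt.continuousWithinAt
  have hg : ContinuousOn (fun t ↦ |f' t|) (Icc l r) := hf'.abs
  have hy := continuousOn_primitive_of_continuousOn hlr hg
  have hfy : ∀ t ∈ Icc l r, |f t| ≤ ∫ s in l..t, |f' s| := fun t ht ↦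
    abs_le_integral_abs_deriv_of_eq_zero ht.1 (fun s hs ↦ hderiv s ⟨hs.1, hs.2.trans ht.2⟩)
      ((hf'.mono (Icc_subset_Icc_right ht.2)).intervalIntegrable_of_Icc ht.1) hfl
  calc ∫ t in l..r, |f t * f' t|
      ≤ ∫ t in l..r, (∫ s in l..t, |f' s|) * |f' t| := by
        refine integral_mono_on (μ := volume) hlr
          ((hf.mul hf').abs.intervalIntegrable_of_Icc hlr)
          ((hy.mul hg).intervalIntegrable_of_Icc hlr) fun t ht ↦ ?_
        rw [abs_mul]
        exact mul_le_mul_of_nonneg_right (hfy t ht) (abs_nonneg _)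
    _ = (∫ t in l..r, |f' t|) ^ 2 / 2 := integral_primitive_mul_self hlr hg
    _ ≤ (r - l) * (∫ t in l..r, |f' t| ^ 2) / 2 := by
        gcongr
        exact sq_integral_le_mul_integral_sq hlr (hg.intervalIntegrable_of_Icc hlr)
          ((hg.pow 2).intervalIntegrable_of_Icc hlr)
    _ = (r - l) / 2 * ∫ t in l..r, f' t ^ 2 := by simp_rw [sq_abs]; ring

theorem integral_abs_mul_deriv_le_of_right_eq_zero {f f' : ℝ → ℝ} {l r : ℝ} (hlr : l ≤ r)
    (hderiv : ∀ t ∈ Icc l r, HasDerivAt f (f' t) t) (hf' : ContinuousOn f' (Icc l r))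
    (hfr : f r = 0) :
    ∫ t in l..r, |f t * f' t| ≤ (r - l) / 2 * ∫ t in l..r, f' t ^ 2 := by
  have hreflect := integral_abs_mul_deriv_le_of_left_eq_zero (f := fun t ↦ f (-t))
    (f' := fun t ↦ -f' (-t)) (neg_le_neg hlr)
    (fun t ht ↦ ((hderiv (-t) (by simpa [neg_le, le_neg] using ht.symm)).comp t
      (hasDerivAt_neg' t)).congr_deriv (mul_neg_one _))
    (hf'.comp continuous_neg.continuousOn
      (fun t ht ↦ by simpa [neg_le, le_neg] using ht.symm)).neg
    (by simpa using hfr)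
  simpa [abs_mul, neg_sq, integral_comp_neg (fun t ↦ |f t| * |f' t|),
    integral_comp_neg (fun t ↦ f' t ^ 2), neg_add_eq_sub] using hreflect

end intervalIntegral

theorem opial_original_general (a : ℝ) (ha : 0 < a) (f f' : ℝ → ℝ)
    (hderiv : ∀ t ∈ Set.Icc (0:ℝ) a, HasDerivAt f (f' t) t)
    (hf'c : ContinuousOn f' (Set.Icc (0:ℝ) a))
    (hf0 : f 0 = 0) (hfa : f a = 0) :
    ∫ t in (0:ℝ)..a, |f t * f' t| ≤ (a / 4) * ∫ t in (0:ℝ)..a, (f' t) ^ 2 := by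
  have hc : a / 2 ∈ Icc 0 a := ⟨by positivity, by linarith⟩
  have hleft := integral_abs_mul_deriv_le_of_left_eq_zero hc.1
    (fun t ht ↦ hderiv t ⟨ht.1, ht.2.trans hc.2⟩) (hf'c.mono (Icc_subset_Icc_right hc.2)) hf0
  have hright := integral_abs_mul_deriv_le_of_right_eq_zero hc.2
    (fun t ht ↦ hderiv t ⟨hc.1.trans ht.1, ht.2⟩) (hf'c.mono (Icc_subset_Icc_left hc.1)) hfa
  have hff' : ContinuousOn (fun t ↦ |f t * f' t|) (Icc 0 a) :=
    (ContinuousOn.mul (fun t ht ↦ (hderiv t ht).continuousAt.continuousWithinAt) hf'c).abs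
  have hf'sq : ContinuousOn (fun t ↦ f' t ^ 2) (Icc 0 a) := hf'c.pow 2
  rw [← integral_add_adjacent_intervals
    ((hff'.mono (Icc_subset_Icc_right hc.2)).intervalIntegrable_of_Icc hc.1)
    ((hff'.mono (Icc_subset_Icc_left hc.1)).intervalIntegrable_of_Icc hc.2),
    ← integral_add_adjacent_intervals
    ((hf'sq.mono (Icc_subset_Icc_right hc.2)).intervalIntegrable_of_Icc hc.1)
    ((hf'sq.mono (Icc_subset_Icc_left hc.1)).intervalIntegrable_of_Icc hc.2)]
  linarith

/-- Original Opial inequality. -/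
theorem opial_original (a : ℝ) (ha : 0 < a) (f f' : ℝ → ℝ)
    (hderiv : ∀ t ∈ Set.Icc (0:ℝ) a, HasDerivAt f (f' t) t)
    (hf'c : ContinuousOn f' (Set.Icc (0:ℝ) a))
    (hf0 : f 0 = 0) (hfa : f a = 0)
    (hpos : ∀ t ∈ Set.Ioo (0:ℝ) a, 0 < f t) :
    ∫ t in (0:ℝ)..a, |f t * f' t| ≤ (a / 4) * ∫ t in (0:ℝ)..a, (f' t) ^ 2 :=
  opial_original_general a ha f f' hderiv hf'c hf0 hfa
end

section
/- Weighted Opial inequality for general kernels: Let I = [a,b], Φ : I × I → ℝ continuous and nonnegative, y, h ∈ C(I) with |y(x)| ≤ ∫ₐˣ Φ(x,t)|h(t)| dt for all x ∈ I (with a ≤ x). Let α, β > 0, r > max(1, α), and u, v ∈ C(I) with u ≥ 0, v > 0. Then for x ∈ I, ∫ₐˣ u(s)|y(s)|^β |h(s)|^α ds ≤ C(x) (∫ₐˣ v(s)|h(s)|^r ds)^{(α+β)/r}, where C(x) = (α/(α+β))^{α/r} (∫ₐˣ (u(s)^r v(s)^{-α})^{1/(r-α)} P(s)^{β(r-1)/(r-α)}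 ds)^{(r-α)/r} and P(s) = ∫ₐˢ v(t)^{-1/(r-1)} Φ(s,t)^{r/(r-1)} dt. -/
/-!
Put `z(s) = ∫ₐˢ v |h|ʳ`. Hölder's inequality with weight `v` and exponents `r/(r-1)`, `r`,
applied to the domination hypothesis, gives `|y(s)| ≤ P(s)^((r-1)/r) z(s)^(1/r)`, hence
`u |y|^β |h|^α ≤ (u P^(β(r-1)/r)) (|h|^α z^(β/r))`. A second weighted Hölder inequality, with
exponents `r/(r-α)`, `r/α`, splits the integral of the right side into the first factor of
`C(x)` and `(∫ₐˣ z' z^(β/α))^(α/r)`, and `∫ₐˣ z' z^(β/α) = α/(α+β) z(x)^((α+β)/α)`.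
-/

open Set MeasureTheory intervalIntegral

theorem ContinuousOn.memLp_restrict_Icc {E : Type*} [NormedAddCommGroup E] {f : ℝ → E} {a b : ℝ}
    (hf : ContinuousOn f (Icc a b)) (p : ENNReal) : MemLp f p (volume.restrict (Icc a b)) := by
  obtain ⟨C, hC⟩ := isCompact_Icc.exists_bound_of_continuousOn hf
  exact (memLp_top_of_bound (hf.aestronglyMeasurable measurableSet_Icc) C
    (ae_restrict_of_forall_mem measurableSet_Icc hC)).mono_exponent le_top

section Holder

variable {f g w : ℝ → ℝ} {a b : ℝ}

theorem intervalIntegral_mul_le_Lp_mul_Lq_of_nonneg {p q : ℝ} (hpq : p.HolderConjugate q)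
    (hab : a ≤ b) (hf : ContinuousOn f (Icc a b)) (hg : ContinuousOn g (Icc a b))
    (hf0 : ∀ t ∈ Icc a b, 0 ≤ f t) (hg0 : ∀ t ∈ Icc a b, 0 ≤ g t) :
    ∫ t in a..b, f t * g t ≤
      (∫ t in a..b, f t ^ p) ^ (1 / p) * (∫ t in a..b, g t ^ q) ^ (1 / q) := by
  simp only [integral_of_le hab, ← integral_Icc_eq_integral_Ioc]
  exact integral_mul_le_Lp_mul_Lq_of_nonneg hpq
    (ae_restrict_of_forall_mem measurableSet_Icc hf0)
    (ae_restrict_of_forall_mem measurableSet_Icc hg0)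
    (hf.memLp_restrict_Icc _) (hg.memLp_restrict_Icc _)

theorem intervalIntegral_mul_le_weighted_Lp_mul_Lq {q : ℝ} (hq : 1 < q) (hab : a ≤ b)
    (hf : ContinuousOn f (Icc a b)) (hg : ContinuousOn g (Icc a b))
    (hw : ContinuousOn w (Icc a b)) (hf0 : ∀ t ∈ Icc a b, 0 ≤ f t)
    (hg0 : ∀ t ∈ Icc a b, 0 ≤ g t) (hw0 : ∀ t ∈ Icc a b, 0 < w t) :
    ∫ t in a..b, f t * g t ≤
      (∫ t in a..b, w t ^ (-(1 / (q - 1))) * f t ^ (q / (q - 1))) ^ ((q - 1) / q) *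
        (∫ t in a..b, w t * g t ^ q) ^ (1 / q) := by
  have hq0 : 0 < q := zero_lt_one.trans hq
  have hsplit : ∫ t in a..b, f t * g t =
      ∫ t in a..b, (w t ^ (-(1 / q)) * f t) * (w t ^ (1 / q) * g t) := by
    refine integral_congr fun t ht => ?_
    rw [uIcc_of_le hab] at ht
    have hw_inv : w t ^ (-(1 / q)) * w t ^ (1 / q) = 1 := by
      rw [← Real.rpow_add (hw0 t ht), neg_add_cancel, Real.rpow_zero]
    linear_combination (f t * g t) * hw_inv.symm
  have hfw : ∫ t in a..b, (w t ^ (-(1 / q)) * f t) ^ (q / (q - 1)) =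
      ∫ t in a..b, w t ^ (-(1 / (q - 1))) * f t ^ (q / (q - 1)) := by
    refine integral_congr fun t ht => ?_
    rw [uIcc_of_le hab] at ht
    rw [Real.mul_rpow (Real.rpow_nonneg (hw0 t ht).le _) (hf0 t ht),
      ← Real.rpow_mul (hw0 t ht).le]
    congr 2
    field_simp
  have hgw : ∫ t in a..b, (w t ^ (1 / q) * g t) ^ q = ∫ t in a..b, w t * g t ^ q := by
    refine integral_congr fun t ht => ?_
    rw [uIcc_of_le hab] at ht
    rw [Real.mul_rpow (Real.rpow_nonneg (hw0 t ht).le _) (hg0 t ht),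
      ← Real.rpow_mul (hw0 t ht).le, one_div_mul_cancel hq0.ne', Real.rpow_one]
  have hholder := intervalIntegral_mul_le_Lp_mul_Lq_of_nonneg
    (f := fun t => w t ^ (-(1 / q)) * f t) (g := fun t => w t ^ (1 / q) * g t)
    (.symm (.conjExponent hq)) hab
    ((hw.rpow_const fun t ht => Or.inl (hw0 t ht).ne').mul hf)
    ((hw.rpow_const fun t ht => Or.inl (hw0 t ht).ne').mul hg)
    (fun t ht => mul_nonneg (Real.rpow_nonneg (hw0 t ht).le _) (hf0 t ht))
    (fun t ht => mul_nonneg (Real.rpow_nonneg (hw0 t ht).le _) (hg0 t ht))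
  rwa [← hsplit, Real.conjExponent, hfw, hgw, one_div_div] at hholder

end Holder

theorem continuousOn_parametric_primitive_Icc {f : ℝ → ℝ → ℝ} {a b : ℝ}
    (hf : ContinuousOn (fun p : ℝ × ℝ => f p.1 p.2) (Icc a b ×ˢ Icc a b)) :
    ContinuousOn (fun s => ∫ t in a..s, f s t) (Icc a b) := by
  rcases lt_or_ge b a with hba | hab
  · simp [Icc_eq_empty_of_lt hba]
  -- extend `f` continuously by clamping both arguments to `[a, b]`
  set e : ℝ → ℝ := fun s => (projIcc a b hab s : ℝ)
  have he : Continuous e := continuous_projIcc.subtype_val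
  have he_id : ∀ s ∈ Icc a b, e s = s := fun s hs => by simp [e, projIcc_of_mem hab hs]
  have hext : Continuous fun p : ℝ × ℝ => f (e p.1) (e p.2) :=
    hf.comp_continuous ((he.comp continuous_fst).prodMk (he.comp continuous_snd))
      fun p => ⟨(projIcc a b hab p.1).2, (projIcc a b hab p.2).2⟩
  refine (continuous_parametric_intervalIntegral_of_continuous (f := fun s t => f (e s) (e t))
    hext continuous_id).continuousOn.congr fun s hs => integral_congr fun t ht => ?_
  rw [uIcc_of_le hs.1] at ht
  simp only [he_id s hs, he_id t ⟨ht.1, ht.2.trans hs.2⟩]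

theorem ContinuousOn.intervalIntegral_primitive {G : ℝ → ℝ} {a b : ℝ}
    (hG : ContinuousOn G (Icc a b)) : ContinuousOn (fun s => ∫ t in a..s, G t) (Icc a b) := by
  rcases lt_or_ge b a with hba | hab
  · simp [Icc_eq_empty_of_lt hba]
  simpa [uIcc_of_le hab] using continuousOn_primitive_interval (μ := volume)
    (hG.integrableOn_Icc.mono_set (uIcc_of_le hab).subset)

theorem integral_nonneg_of_mem_Icc {G : ℝ → ℝ} {a b s : ℝ} (hG : ∀ t ∈ Icc a b, 0 ≤ G t)
    (hs : s ∈ Icc a b) : 0 ≤ ∫ t in a..s, G t :=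
  integral_nonneg hs.1 fun t ht => hG t ⟨ht.1, ht.2.trans hs.2⟩

theorem integral_mul_primitive_rpow {G : ℝ → ℝ} {a b γ : ℝ} (hab : a ≤ b)
    (hG : ContinuousOn G (Icc a b)) (hγ : 0 ≤ γ) :
    ∫ s in a..b, G s * (∫ t in a..s, G t) ^ γ = (∫ t in a..b, G t) ^ (γ + 1) / (γ + 1) := by
  set z : ℝ → ℝ := fun s => ∫ t in a..s, G t
  have hz : ContinuousOn z (Icc a b) := hG.intervalIntegral_primitive
  have hγ1 : 0 < γ + 1 := by linarith
  have hz' : ∀ s ∈ Ioo a b, HasDerivAt z (G s) s := fun s hs =>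
    integral_hasDerivAt_right
      ((hG.mono (Icc_subset_Icc le_rfl hs.2.le)).intervalIntegrable_of_Icc hs.1.le)
      (hG.mono Ioo_subset_Icc_self |>.stronglyMeasurableAtFilter isOpen_Ioo s hs)
      (hG.continuousAt (Icc_mem_nhds hs.1 hs.2))
  have hF : ∀ s ∈ Ioo a b,
      HasDerivAt (fun s => z s ^ (γ + 1) / (γ + 1)) (G s * z s ^ γ) s := fun s hs => by
    refine (((hz' s hs).rpow_const (Or.inr (by linarith))).div_const _).congr_deriv ?_
    rw [add_sub_cancel_right]
    field_simp
  rw [integral_eq_sub_of_hasDerivAt_of_le hab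
    ((hz.rpow_const fun _ _ => Or.inr hγ1.le).div_const _) hF
    ((hG.mul (hz.rpow_const fun _ _ => Or.inr hγ)).intervalIntegrable_of_Icc hab)]
  simp [z, Real.zero_rpow hγ1.ne']

theorem integral_mul_rpow_mul_primitive_rpow {a b α β r : ℝ} {g v : ℝ → ℝ} (hab : a ≤ b)
    (hg : ContinuousOn g (Icc a b)) (hv : ContinuousOn v (Icc a b))
    (hg0 : ∀ s ∈ Icc a b, 0 ≤ g s) (hv0 : ∀ s ∈ Icc a b, 0 ≤ v s)
    (hα : 0 < α) (hβ : 0 ≤ β) (hr : 0 < r) :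
    ∫ s in a..b, v s * (g s ^ α * (∫ t in a..s, v t * g t ^ r) ^ (β / r)) ^ (r / α) =
      α / (α + β) * (∫ t in a..b, v t * g t ^ r) ^ ((α + β) / α) := by
  set z : ℝ → ℝ := fun s => ∫ t in a..s, v t * g t ^ r
  have hintegrand : EqOn (fun s => v s * (g s ^ α * z s ^ (β / r)) ^ (r / α))
      (fun s => (v s * g s ^ r) * z s ^ (β / α)) (uIcc a b) := by
    intro s hs
    rw [uIcc_of_le hab] at hs
    have hz0 : 0 ≤ z s := integral_nonneg_of_mem_Icc
      (fun t ht => mul_nonneg (hv0 t ht) (Real.rpow_nonneg (hg0 t ht) r)) hs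
    have hg0 := hg0 s hs
    dsimp only
    rw [Real.mul_rpow (Real.rpow_nonneg hg0 _) (Real.rpow_nonneg hz0 _), ← Real.rpow_mul hg0,
      ← Real.rpow_mul hz0, mul_div_cancel₀ r hα.ne', show β / r * (r / α) = β / α by field_simp]
    ring
  rw [integral_congr hintegrand, integral_mul_primitive_rpow (G := fun t => v t * g t ^ r) hab
      (hv.mul (hg.rpow_const fun _ _ => Or.inr hr.le)) (div_nonneg hβ hα.le),
    show β / α + 1 = (α + β) / α by field_simp; ring]
  field_simp

theorem integral_le_of_le_mul_rpow_primitive {a b α β r : ℝ} {F f g v : ℝ → ℝ} (hab : a ≤ b)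
    (hf : ContinuousOn f (Icc a b)) (hg : ContinuousOn g (Icc a b))
    (hv : ContinuousOn v (Icc a b)) (hF0 : ∀ s ∈ Icc a b, 0 ≤ F s)
    (hf0 : ∀ s ∈ Icc a b, 0 ≤ f s) (hg0 : ∀ s ∈ Icc a b, 0 ≤ g s)
    (hv0 : ∀ s ∈ Icc a b, 0 < v s)
    (hF : ∀ s ∈ Icc a b, F s ≤ f s * (g s ^ α * (∫ t in a..s, v t * g t ^ r) ^ (β / r)))
    (hα : 0 < α) (hβ : 0 ≤ β) (hαr : α < r) :
    ∫ s in a..b, F s ≤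
      (α / (α + β)) ^ (α / r) *
        (∫ s in a..b, v s ^ (-(α / (r - α))) * f s ^ (r / (r - α))) ^ ((r - α) / r) *
        (∫ s in a..b, v s * g s ^ r) ^ ((α + β) / r) := by
  set z : ℝ → ℝ := fun s => ∫ t in a..s, v t * g t ^ r
  have hr0 : 0 < r := hα.trans hαr
  have hz0 : ∀ s ∈ Icc a b, 0 ≤ z s := fun s => integral_nonneg_of_mem_Icc
    fun t ht => mul_nonneg (hv0 t ht).le (Real.rpow_nonneg (hg0 t ht) r)
  have hG : ContinuousOn (fun s => g s ^ α * z s ^ (β / r)) (Icc a b) :=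
    (hg.rpow_const fun _ _ => Or.inr hα.le).mul
      ((hv.mul (hg.rpow_const fun _ _ => Or.inr hr0.le)).intervalIntegral_primitive.rpow_const
        fun _ _ => Or.inr (div_nonneg hβ hr0.le))
  have hmono : ∫ s in a..b, F s ≤ ∫ s in a..b, f s * (g s ^ α * z s ^ (β / r)) := by
    simp only [integral_of_le hab, ← integral_Icc_eq_integral_Ioc]
    exact setIntegral_mono_of_nonneg hF0 hF (hf.mul hG).integrableOn_Icc
  have hholder := intervalIntegral_mul_le_weighted_Lp_mul_Lq ((one_lt_div hα).2 hαr) hab hf hG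
    hv hf0 (fun s hs => mul_nonneg (Real.rpow_nonneg (hg0 s hs) _) (Real.rpow_nonneg (hz0 s hs) _))
    hv0
  have hzb := hz0 b ⟨hab, le_rfl⟩
  rw [integral_mul_rpow_mul_primitive_rpow hab hg hv hg0 (fun s hs => (hv0 s hs).le) hα hβ hr0,
    show 1 / (r / α - 1) = α / (r - α) by field_simp,
    show r / α / (r / α - 1) = r / (r - α) by field_simp,
    show (r / α - 1) / (r / α) = (r - α) / r by field_simp, one_div_div,
    Real.mul_rpow (by positivity) (Real.rpow_nonneg hzb _), ← Real.rpow_mul hzb,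
    div_mul_div_cancel₀ hα.ne'] at hholder
  linarith

theorem weighted_opial_of_pointwise_bound {a b α β r : ℝ} {Y P g u v : ℝ → ℝ} (hab : a ≤ b)
    (hP : ContinuousOn P (Icc a b)) (hg : ContinuousOn g (Icc a b))
    (hu : ContinuousOn u (Icc a b)) (hv : ContinuousOn v (Icc a b))
    (hY0 : ∀ s ∈ Icc a b, 0 ≤ Y s) (hP0 : ∀ s ∈ Icc a b, 0 ≤ P s)
    (hg0 : ∀ s ∈ Icc a b, 0 ≤ g s) (hu0 : ∀ s ∈ Icc a b, 0 ≤ u s)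
    (hv0 : ∀ s ∈ Icc a b, 0 < v s)
    (hY : ∀ s ∈ Icc a b, Y s ≤ P s ^ ((r - 1) / r) * (∫ t in a..s, v t * g t ^ r) ^ (1 / r))
    (hα : 0 < α) (hβ : 0 < β) (hr1 : 1 < r) (hαr : α < r) :
    ∫ s in a..b, u s * Y s ^ β * g s ^ α ≤
      (α / (α + β)) ^ (α / r) *
        (∫ s in a..b, (u s ^ r * v s ^ (-α)) ^ (1 / (r - α)) *
          P s ^ (β * (r - 1) / (r - α))) ^ ((r - α) / r) *
        (∫ s in a..b, v s * g s ^ r) ^ ((α + β) / r) := by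
  set z : ℝ → ℝ := fun s => ∫ t in a..s, v t * g t ^ r
  have hr0 : 0 < r := zero_lt_one.trans hr1
  have hpt : ∀ s ∈ Icc a b, u s * Y s ^ β * g s ^ α ≤
      u s * P s ^ (β * (r - 1) / r) * (g s ^ α * z s ^ (β / r)) := fun s hs => by
    have hz0 : 0 ≤ z s := integral_nonneg_of_mem_Icc
      (fun t ht => mul_nonneg (hv0 t ht).le (Real.rpow_nonneg (hg0 t ht) r)) hs
    have hYβ := Real.rpow_le_rpow (hY0 s hs) (hY s hs) hβ.le
    rw [Real.mul_rpow (Real.rpow_nonneg (hP0 s hs) _) (Real.rpow_nonneg hz0 _),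
      ← Real.rpow_mul (hP0 s hs), ← Real.rpow_mul hz0, mul_comm ((r - 1) / r),
      mul_comm (1 / r), ← mul_div_assoc, mul_one_div] at hYβ
    calc u s * Y s ^ β * g s ^ α
        ≤ u s * (P s ^ (β * (r - 1) / r) * z s ^ (β / r)) * g s ^ α := by
          gcongr
          · exact Real.rpow_nonneg (hg0 s hs) α
          · exact hu0 s hs
      _ = _ := by ring
  have hintegrand : EqOn
      (fun s => v s ^ (-(α / (r - α))) * (u s * P s ^ (β * (r - 1) / r)) ^ (r / (r - α)))
      (fun s => (u s ^ r * v s ^ (-α)) ^ (1 / (r - α)) * P s ^ (β * (r - 1) / (r - α)))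
      (uIcc a b) := by
    intro s hs
    rw [uIcc_of_le hab] at hs
    have hu0 := hu0 s hs; have hv0 := (hv0 s hs).le; have hP0 := hP0 s hs
    dsimp only
    rw [Real.mul_rpow hu0 (Real.rpow_nonneg hP0 _), ← Real.rpow_mul hP0,
      Real.mul_rpow (Real.rpow_nonneg hu0 _) (Real.rpow_nonneg hv0 _), ← Real.rpow_mul hu0,
      ← Real.rpow_mul hv0, mul_one_div, neg_mul, mul_one_div,
      show β * (r - 1) / r * (r / (r - α)) = β * (r - 1) / (r - α) by field_simp]
    ring
  rw [← integral_congr hintegrand]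
  exact integral_le_of_le_mul_rpow_primitive hab (hu.mul (hP.rpow_const fun _ _ =>
      Or.inr (div_nonneg (mul_nonneg hβ.le (sub_nonneg.2 hr1.le)) hr0.le))) hg hv
    (fun s hs => mul_nonneg (mul_nonneg (hu0 s hs) (Real.rpow_nonneg (hY0 s hs) _))
      (Real.rpow_nonneg (hg0 s hs) _))
    (fun s hs => mul_nonneg (hu0 s hs) (Real.rpow_nonneg (hP0 s hs) _)) hg0 hv0 hpt hα hβ.le hαr

theorem weighted_opial_general_kernel_general (a b : ℝ)
    (Φ : ℝ → ℝ → ℝ)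
    (hΦc : ContinuousOn (fun p : ℝ × ℝ => Φ p.1 p.2) (Set.Icc a b ×ˢ Set.Icc a b))
    (hΦ0 : ∀ s ∈ Set.Icc a b, ∀ t ∈ Set.Icc a b, 0 ≤ Φ s t)
    (y h u v : ℝ → ℝ)
    (hh : ContinuousOn h (Set.Icc a b))
    (hu : ContinuousOn u (Set.Icc a b)) (hv : ContinuousOn v (Set.Icc a b))
    (hu0 : ∀ s ∈ Set.Icc a b, 0 ≤ u s) (hv0 : ∀ s ∈ Set.Icc a b, 0 < v s)
    (hdom : ∀ x ∈ Set.Icc a b, |y x| ≤ ∫ t in a..x, Φ x t * |h t|)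
    (α β r : ℝ) (hα : 0 < α) (hβ : 0 < β) (hr : max 1 α < r)
    (x : ℝ) (hx : x ∈ Set.Icc a b) :
    ∫ s in a..x, u s * |y s| ^ β * |h s| ^ α ≤
      ((α / (α + β)) ^ (α / r) *
        (∫ s in a..x, (u s ^ r * v s ^ (-α)) ^ (1 / (r - α)) *
            (∫ t in a..s, v t ^ (-(1 / (r - 1))) * Φ s t ^ (r / (r - 1)))
              ^ (β * (r - 1) / (r - α))) ^ ((r - α) / r)) *
      (∫ s in a..x, v s * |h s| ^ r) ^ ((α + β) / r) := by
  have hr1 : 1 < r := (le_max_left 1 α).trans_lt hr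
  have hsub : ∀ {s}, s ∈ Icc a x → Icc a s ⊆ Icc a b :=
    fun hs => Icc_subset_Icc_right (hs.2.trans hx.2)
  have hxb : Icc a x ⊆ Icc a b := hsub ⟨hx.1, le_rfl⟩
  have hK : ContinuousOn (fun p : ℝ × ℝ => v p.2 ^ (-(1 / (r - 1))) * Φ p.1 p.2 ^ (r / (r - 1)))
      (Icc a x ×ˢ Icc a x) :=
    (((hv.mono hxb).comp continuousOn_snd fun _ hp => hp.2).rpow_const
      fun _ hp => Or.inl (hv0 _ (hxb hp.2)).ne').mul
      ((hΦc.mono (prod_mono hxb hxb)).rpow_const fun _ _ => Or.inr (by positivity))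
  refine weighted_opial_of_pointwise_bound hx.1 (continuousOn_parametric_primitive_Icc hK)
    (hh.mono hxb).abs (hu.mono hxb) (hv.mono hxb) (fun _ _ => abs_nonneg _)
    (fun s hs => integral_nonneg_of_mem_Icc (fun t ht => mul_nonneg
      (Real.rpow_nonneg (hv0 t (hxb ht)).le _) (Real.rpow_nonneg (hΦ0 s (hxb hs) t (hxb ht)) _)) hs)
    (fun _ _ => abs_nonneg _) (fun s hs => hu0 s (hxb hs)) (fun s hs => hv0 s (hxb hs))
    (fun s hs => (hdom s (hxb hs)).trans ?_) hα hβ hr1 ((le_max_right 1 α).trans_lt hr)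
  exact intervalIntegral_mul_le_weighted_Lp_mul_Lq hr1 hs.1
    (hΦc.comp (continuousOn_const.prodMk continuousOn_id) fun t ht => ⟨hxb hs, hsub hs ht⟩)
    (hh.mono (hsub hs)).abs (hv.mono (hsub hs)) (fun t ht => hΦ0 s (hxb hs) t (hsub hs ht))
    (fun _ _ => abs_nonneg _) fun t ht => hv0 t (hsub hs ht)

/-- Weighted Opial inequality for general kernels (Theorem 2.1 / Koliha–Pečarić). -/
theorem weighted_opial_general_kernel (a b : ℝ) (hab : a ≤ b)
    (Φ : ℝ → ℝ → ℝ)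
    (hΦc : ContinuousOn (fun p : ℝ × ℝ => Φ p.1 p.2) (Set.Icc a b ×ˢ Set.Icc a b))
    (hΦ0 : ∀ s ∈ Set.Icc a b, ∀ t ∈ Set.Icc a b, 0 ≤ Φ s t)
    (y h u v : ℝ → ℝ)
    (hy : ContinuousOn y (Set.Icc a b)) (hh : ContinuousOn h (Set.Icc a b))
    (hu : ContinuousOn u (Set.Icc a b)) (hv : ContinuousOn v (Set.Icc a b))
    (hu0 : ∀ s ∈ Set.Icc a b, 0 ≤ u s) (hv0 : ∀ s ∈ Set.Icc a b, 0 < v s)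
    (hdom : ∀ x ∈ Set.Icc a b, |y x| ≤ ∫ t in a..x, Φ x t * |h t|)
    (α β r : ℝ) (hα : 0 < α) (hβ : 0 < β) (hr : max 1 α < r)
    (x : ℝ) (hx : x ∈ Set.Icc a b) :
    ∫ s in a..x, u s * |y s| ^ β * |h s| ^ α ≤
      ((α / (α + β)) ^ (α / r) *
        (∫ s in a..x, (u s ^ r * v s ^ (-α)) ^ (1 / (r - α)) *
            (∫ t in a..s, v t ^ (-(1 / (r - 1))) * Φ s t ^ (r / (r - 1)))
              ^ (β * (r - 1) / (r - α))) ^ ((r - α) / r)) *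
      (∫ s in a..x, v s * |h s| ^ r) ^ ((α + β) / r) :=
  weighted_opial_general_kernel_general a b Φ hΦc hΦ0 y h u v hh hu hv hu0 hv0 hdom α β r hα hβ hr x
    hx
end

section
/- Specialization of the weighted Opial inequality at r = 2: Under the kernel domination hypothesis |y(x)| ≤ ∫ₐˣ Φ(x,t)|h(t)| dt, with β > 0, 0 < α < 2, u ≥ 0 and v > 0 continuous on I, one has ∫ₐˣ u(s)|y(s)|^β |h(s)|^α ds ≤ C̃(x) (∫ₐˣ v(s)|h(s)|² ds)^{(α+β)/2}, where C̃(x) = (α/(α+β))^{α/2} (∫ₐˣ (u(s)² v(s)^{-α})^{1/(2-α)} P̃(s)^{β/(2-α)} ds)^{(2-α)/2} and P̃(s) = ∫ₐˢ v(t)^{-1} Φ(s,t)² dt. -/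
open intervalIntegral MeasureTheory Set

/-!
Cauchy–Schwarz in the kernel bound gives `|y s| ≤ P̃(s)^(1/2) z(s)^(1/2)` with
`z(s) = ∫ₐˢ v |h|²`. Writing the integrand as `(u v^(-α/2) P̃^(β/2)) · (z^(β/2) (v |h|²)^(α/2))`
and applying Hölder with exponents `2/(2-α)` and `2/α`, the second factor becomes
`∫ₐˣ z^(β/α) z' = (α/(α+β)) z(x)^((α+β)/α)`.
-/

section

variable {a b : ℝ}

theorem ContinuousOn.memLp_restrict_Ioc {f : ℝ → ℝ} (hf : ContinuousOn f (Icc a b))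
    (p : ENNReal) : MemLp f p (volume.restrict (Ioc a b)) := by
  obtain ⟨C, hC⟩ := isCompact_Icc.exists_bound_of_continuousOn hf
  refine MemLp.of_bound ((hf.mono Ioc_subset_Icc_self).aestronglyMeasurable measurableSet_Ioc)
    C ((ae_restrict_iff' measurableSet_Ioc).2 (.of_forall fun t ht => ?_))
  exact hC t (Ioc_subset_Icc_self ht)

theorem intervalIntegral.integral_mul_le_Lp_mul_Lq_of_continuousOn (hab : a ≤ b) {p q : ℝ}
    (hpq : p.HolderConjugate q) {f g : ℝ → ℝ}
    (hf : ContinuousOn f (Icc a b)) (hg : ContinuousOn g (Icc a b))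
    (hf0 : ∀ t ∈ Icc a b, 0 ≤ f t) (hg0 : ∀ t ∈ Icc a b, 0 ≤ g t) :
    ∫ t in a..b, f t * g t ≤
      (∫ t in a..b, f t ^ p) ^ (1 / p) * (∫ t in a..b, g t ^ q) ^ (1 / q) := by
  have ae_nonneg {φ : ℝ → ℝ} (hφ : ∀ t ∈ Icc a b, 0 ≤ φ t) :
      0 ≤ᵐ[volume.restrict (Ioc a b)] φ :=
    (ae_restrict_iff' measurableSet_Ioc).2 (.of_forall fun t ht => hφ t (Ioc_subset_Icc_self ht))
  simp only [integral_of_le hab]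
  exact integral_mul_le_Lp_mul_Lq_of_nonneg hpq (ae_nonneg hf0) (ae_nonneg hg0)
    (hf.memLp_restrict_Ioc _) (hg.memLp_restrict_Ioc _)

theorem intervalIntegral.integral_mul_le_weighted_L2_mul_L2 (hab : a ≤ b) {k g v : ℝ → ℝ}
    (hk : ContinuousOn k (Icc a b)) (hg : ContinuousOn g (Icc a b))
    (hv : ContinuousOn v (Icc a b)) (hk0 : ∀ t ∈ Icc a b, 0 ≤ k t)
    (hg0 : ∀ t ∈ Icc a b, 0 ≤ g t) (hv0 : ∀ t ∈ Icc a b, 0 < v t) :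
    ∫ t in a..b, k t * g t ≤
      (∫ t in a..b, v t ^ (-(1:ℝ)) * k t ^ (2:ℝ)) ^ (1 / 2 : ℝ) *
        (∫ t in a..b, v t * g t ^ (2:ℝ)) ^ (1 / 2 : ℝ) := by
  set k' : ℝ → ℝ := fun t => v t ^ (-(1 / 2) : ℝ) * k t
  set g' : ℝ → ℝ := fun t => v t ^ (1 / 2 : ℝ) * g t
  have hv' (r : ℝ) : ContinuousOn (fun t => v t ^ r) (Icc a b) :=
    hv.rpow_const fun t ht => .inl (hv0 t ht).ne'
  have mem {t} (ht : t ∈ uIcc a b) : t ∈ Icc a b := uIcc_of_le hab ▸ ht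
  have hprod : ∫ t in a..b, k t * g t = ∫ t in a..b, k' t * g' t := by
    refine integral_congr fun t ht => ?_
    rw [mul_mul_mul_comm, ← Real.rpow_add (hv0 t (mem ht))]
    norm_num
  have hk'2 : ∫ t in a..b, k' t ^ (2:ℝ) = ∫ t in a..b, v t ^ (-(1:ℝ)) * k t ^ (2:ℝ) := by
    refine integral_congr fun t ht => ?_
    have hvt := (hv0 t (mem ht)).le
    rw [Real.mul_rpow (Real.rpow_nonneg hvt _) (hk0 t (mem ht)), ← Real.rpow_mul hvt]
    norm_num
  have hg'2 : ∫ t in a..b, g' t ^ (2:ℝ) = ∫ t in a..b, v t * g t ^ (2:ℝ) := by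
    refine integral_congr fun t ht => ?_
    have hvt := (hv0 t (mem ht)).le
    rw [Real.mul_rpow (Real.rpow_nonneg hvt _) (hg0 t (mem ht)), ← Real.rpow_mul hvt]
    norm_num
  rw [hprod, ← hk'2, ← hg'2]
  exact integral_mul_le_Lp_mul_Lq_of_continuousOn hab .two_two ((hv' _).mul hk) ((hv' _).mul hg)
    (fun t ht => mul_nonneg (Real.rpow_nonneg (hv0 t ht).le _) (hk0 t ht))
    (fun t ht => mul_nonneg (Real.rpow_nonneg (hv0 t ht).le _) (hg0 t ht))

theorem intervalIntegral.continuousOn_parametric_primitive_of_continuousOn {k : ℝ → ℝ → ℝ}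
    (hk : ContinuousOn (Function.uncurry k) (Icc a b ×ˢ Icc a b)) :
    ContinuousOn (fun s => ∫ t in a..s, k s t) (Icc a b) := by
  rcases le_or_gt a b with hab | hba
  · set π : ℝ → ℝ := fun t => projIcc a b hab t
    have hπ : Continuous π := continuous_subtype_val.comp continuous_projIcc
    have hπ_id {t} (ht : t ∈ Icc a b) : π t = t := congrArg Subtype.val (projIcc_of_mem hab ht)
    have hk' : Continuous fun p : ℝ × ℝ => k (π p.1) (π p.2) :=
      hk.comp_continuous (hπ.prodMap hπ) fun p =>
        ⟨(projIcc a b hab p.1).2, (projIcc a b hab p.2).2⟩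
    refine (continuous_parametric_intervalIntegral_of_continuous
      (f := fun s t => k (π s) (π t)) hk' continuous_id).continuousOn.congr
        fun s hs => integral_congr fun t ht => ?_
    have ht' : t ∈ Icc a b := Icc_subset_Icc_right hs.2 (uIcc_of_le hs.1 ▸ ht)
    simp only [hπ_id hs, hπ_id ht']
  · simp [Icc_eq_empty_of_lt hba]

theorem intervalIntegral.integral_primitive_rpow_mul (hab : a ≤ b) {γ : ℝ} (hγ : 0 ≤ γ)
    {w : ℝ → ℝ} (hw : ContinuousOn w (Icc a b)) :
    ∫ s in a..b, (∫ t in a..s, w t) ^ γ * w s = (∫ t in a..b, w t) ^ (γ + 1) / (γ + 1) := by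
  set z : ℝ → ℝ := fun s => ∫ t in a..s, w t
  have hz : ContinuousOn z (Icc a b) := by
    simpa only [uIcc_of_le hab] using
      continuousOn_primitive_interval (hw.integrableOn_Icc.mono_set (uIcc_of_le hab).subset)
  have hzd : ∀ s ∈ Ioo a b, HasDerivAt z (w s) s := fun s hs =>
    integral_hasDerivAt_right
      ((hw.mono (Icc_subset_Icc_right hs.2.le)).intervalIntegrable_of_Icc hs.1.le)
      ((hw.mono Ioo_subset_Icc_self).stronglyMeasurableAtFilter isOpen_Ioo s hs)
      (hw.continuousAt (Icc_mem_nhds hs.1 hs.2))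
  have hγ1 : γ + 1 ≠ 0 := by positivity
  have hderiv : ∀ s ∈ Ioo a b,
      HasDerivAt (fun s => z s ^ (γ + 1) / (γ + 1)) (z s ^ γ * w s) s := by
    intro s hs
    refine (((hzd s hs).rpow_const (p := γ + 1) (.inr (by linarith))).div_const
      (γ + 1)).congr_deriv ?_
    rw [add_sub_cancel_right]
    field_simp
  have hz' (r : ℝ) (hr : 0 ≤ r) : ContinuousOn (fun s => z s ^ r) (Icc a b) :=
    hz.rpow_const fun _ _ => .inr hr
  rw [integral_eq_sub_of_hasDerivAt_of_le hab ((hz' _ (by positivity)).div_const _) hderiv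
    (((hz' γ hγ).mul hw).intervalIntegrable_of_Icc hab)]
  simp [z, Real.zero_rpow hγ1]

end

theorem mul_abs_rpow_le_opial_factors {U V P Z Y H α β : ℝ} (hU : 0 ≤ U) (hV : 0 < V)
    (hP : 0 ≤ P) (hZ : 0 ≤ Z) (hβ : 0 ≤ β) (hY : |Y| ≤ P ^ (1 / 2 : ℝ) * Z ^ (1 / 2 : ℝ)) :
    U * |Y| ^ β * |H| ^ α ≤
      U * V ^ (-(α / 2)) * P ^ (β / 2) * (Z ^ (β / 2) * (V * |H| ^ (2:ℝ)) ^ (α / 2)) := by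
  have hYβ : |Y| ^ β ≤ P ^ (β / 2) * Z ^ (β / 2) :=
    calc |Y| ^ β ≤ (P ^ (1 / 2 : ℝ) * Z ^ (1 / 2 : ℝ)) ^ β :=
          Real.rpow_le_rpow (abs_nonneg _) hY hβ
      _ = P ^ (β / 2) * Z ^ (β / 2) := by
          rw [Real.mul_rpow (by positivity) (by positivity), ← Real.rpow_mul hP,
            ← Real.rpow_mul hZ]
          ring_nf
  have hsplit : (V * |H| ^ (2:ℝ)) ^ (α / 2) = V ^ (α / 2) * |H| ^ α := by
    rw [Real.mul_rpow hV.le (by positivity), ← Real.rpow_mul (abs_nonneg H)]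
    ring_nf
  have hcancel : V ^ (-(α / 2)) * V ^ (α / 2) = 1 := by
    rw [← Real.rpow_add hV, neg_add_cancel, Real.rpow_zero]
  calc U * |Y| ^ β * |H| ^ α ≤ U * (P ^ (β / 2) * Z ^ (β / 2)) * |H| ^ α := by gcongr
    _ = _ := by
      rw [hsplit]
      linear_combination (-(U * P ^ (β / 2) * Z ^ (β / 2) * |H| ^ α)) * hcancel

theorem opial_factor_left_rpow {U V P α β : ℝ} (hU : 0 ≤ U) (hV : 0 < V) (hP : 0 ≤ P) :
    (U * V ^ (-(α / 2)) * P ^ (β / 2)) ^ (2 / (2 - α)) =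
      (U ^ (2:ℝ) * V ^ (-α)) ^ (1 / (2 - α)) * P ^ (β / (2 - α)) := by
  rw [Real.mul_rpow (by positivity) (by positivity), Real.mul_rpow hU (by positivity),
    Real.mul_rpow (by positivity) (by positivity), ← Real.rpow_mul hV.le, ← Real.rpow_mul hP,
    ← Real.rpow_mul hU, ← Real.rpow_mul hV.le]
  ring_nf

theorem opial_factor_right_rpow {Z W α β : ℝ} (hZ : 0 ≤ Z) (hW : 0 ≤ W) (hα : α ≠ 0) :
    (Z ^ (β / 2) * W ^ (α / 2)) ^ (2 / α) = Z ^ (β / α) * W := by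
  rw [Real.mul_rpow (by positivity) (by positivity), ← Real.rpow_mul hZ, ← Real.rpow_mul hW,
    show β / 2 * (2 / α) = β / α by field_simp, show α / 2 * (2 / α) = 1 by field_simp,
    Real.rpow_one]

theorem opial_constant_rpow {A Z α β : ℝ} (hZ : 0 ≤ Z) (hα : 0 < α) (hβ : 0 ≤ β) :
    A ^ ((2 - α) / 2) * (Z ^ (β / α + 1) / (β / α + 1)) ^ (α / 2) =
      (α / (α + β)) ^ (α / 2) * A ^ ((2 - α) / 2) * Z ^ ((α + β) / 2) := by
  rw [show β / α + 1 = (α + β) / α by field_simp; ring,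
    Real.div_rpow (Real.rpow_nonneg hZ _) (by positivity), ← Real.rpow_mul hZ,
    show (α + β) / α * (α / 2) = (α + β) / 2 by field_simp, ← inv_div α (α + β),
    Real.inv_rpow (by positivity), div_inv_eq_mul]
  ring

theorem weighted_opial_of_abs_le_sqrt_mul_sqrt {a x α β : ℝ} (hax : a ≤ x) (hα : 0 < α)
    (hα2 : α < 2) (hβ : 0 < β) {y h u v P : ℝ → ℝ} (hy : ContinuousOn y (Icc a x))
    (hh : ContinuousOn h (Icc a x)) (hu : ContinuousOn u (Icc a x))
    (hv : ContinuousOn v (Icc a x)) (hP : ContinuousOn P (Icc a x))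
    (hu0 : ∀ s ∈ Icc a x, 0 ≤ u s) (hv0 : ∀ s ∈ Icc a x, 0 < v s)
    (hP0 : ∀ s ∈ Icc a x, 0 ≤ P s)
    (hyP : ∀ s ∈ Icc a x,
      |y s| ≤ P s ^ (1 / 2 : ℝ) * (∫ t in a..s, v t * |h t| ^ (2:ℝ)) ^ (1 / 2 : ℝ)) :
    ∫ s in a..x, u s * |y s| ^ β * |h s| ^ α ≤
      ((α / (α + β)) ^ (α / 2) *
        (∫ s in a..x, (u s ^ (2:ℝ) * v s ^ (-α)) ^ (1 / (2 - α)) * P s ^ (β / (2 - α)))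
          ^ ((2 - α) / 2)) *
      (∫ s in a..x, v s * |h s| ^ (2:ℝ)) ^ ((α + β) / 2) := by
  set w : ℝ → ℝ := fun t => v t * |h t| ^ (2:ℝ)
  set z : ℝ → ℝ := fun s => ∫ t in a..s, w t
  have hw : ContinuousOn w (Icc a x) := hv.mul (hh.abs.rpow_const fun _ _ => .inr zero_le_two)
  have hw0 : ∀ t ∈ Icc a x, 0 ≤ w t := fun t ht => mul_nonneg (hv0 t ht).le (by positivity)
  have hz : ContinuousOn z (Icc a x) := by
    simpa only [uIcc_of_le hax] using
      continuousOn_primitive_interval (hw.integrableOn_Icc.mono_set (uIcc_of_le hax).subset)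
  have hz0 : ∀ s ∈ Icc a x, 0 ≤ z s := fun s hs =>
    integral_nonneg hs.1 fun t ht => hw0 t ⟨ht.1, ht.2.trans hs.2⟩
  set F : ℝ → ℝ := fun s => u s * v s ^ (-(α / 2)) * P s ^ (β / 2)
  set G : ℝ → ℝ := fun s => z s ^ (β / 2) * w s ^ (α / 2)
  have hF : ContinuousOn F (Icc a x) :=
    (hu.mul (hv.rpow_const fun t ht => .inl (hv0 t ht).ne')).mul
      (hP.rpow_const fun _ _ => .inr (by positivity))
  have hG : ContinuousOn G (Icc a x) :=
    (hz.rpow_const fun _ _ => .inr (by positivity)).mul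
      (hw.rpow_const fun _ _ => .inr (by positivity))
  have hpq : (2 / (2 - α)).HolderConjugate (2 / α) := by
    rw [Real.holderConjugate_iff, lt_div_iff₀ (by linarith), inv_div, inv_div]
    constructor <;> [linarith; ring]
  have mem {s} (hs : s ∈ uIcc a x) : s ∈ Icc a x := uIcc_of_le hax ▸ hs
  have hFp : ∫ s in a..x, F s ^ (2 / (2 - α)) =
      ∫ s in a..x, (u s ^ (2:ℝ) * v s ^ (-α)) ^ (1 / (2 - α)) * P s ^ (β / (2 - α)) :=
    integral_congr fun s hs =>
      opial_factor_left_rpow (hu0 s (mem hs)) (hv0 s (mem hs)) (hP0 s (mem hs))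
  have hGq : ∫ s in a..x, G s ^ (2 / α) = ∫ s in a..x, z s ^ (β / α) * w s :=
    integral_congr fun s hs => opial_factor_right_rpow (hz0 s (mem hs)) (hw0 s (mem hs)) hα.ne'
  calc ∫ s in a..x, u s * |y s| ^ β * |h s| ^ α
      ≤ ∫ s in a..x, F s * G s := by
        refine integral_mono_on hax ?_ ((hF.mul hG).intervalIntegrable_of_Icc hax) fun s hs =>
          mul_abs_rpow_le_opial_factors (hu0 s hs) (hv0 s hs) (hP0 s hs) (hz0 s hs) hβ.le
            (hyP s hs)
        exact ((hu.mul (hy.abs.rpow_const fun _ _ => .inr hβ.le)).mul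
          (hh.abs.rpow_const fun _ _ => .inr hα.le)).intervalIntegrable_of_Icc hax
    _ ≤ (∫ s in a..x, F s ^ (2 / (2 - α))) ^ (1 / (2 / (2 - α))) *
          (∫ s in a..x, G s ^ (2 / α)) ^ (1 / (2 / α)) :=
        integral_mul_le_Lp_mul_Lq_of_continuousOn hax hpq hF hG
          (fun s hs => by have := hu0 s hs; have := hv0 s hs; have := hP0 s hs; positivity)
          (fun s hs => by have := hz0 s hs; have := hw0 s hs; positivity)
    _ = _ := by
        rw [hFp, hGq, integral_primitive_rpow_mul hax (by positivity) hw, one_div_div,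
          one_div_div, opial_constant_rpow (hz0 x ⟨hax, le_rfl⟩) hα hβ.le]

theorem weighted_opial_general_kernel_r_two_general (a b : ℝ)
    (Φ : ℝ → ℝ → ℝ)
    (hΦc : ContinuousOn (fun p : ℝ × ℝ => Φ p.1 p.2) (Set.Icc a b ×ˢ Set.Icc a b))
    (hΦ0 : ∀ s ∈ Set.Icc a b, ∀ t ∈ Set.Icc a b, 0 ≤ Φ s t)
    (y h u v : ℝ → ℝ)
    (hy : ContinuousOn y (Set.Icc a b)) (hh : ContinuousOn h (Set.Icc a b))
    (hu : ContinuousOn u (Set.Icc a b)) (hv : ContinuousOn v (Set.Icc a b))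
    (hu0 : ∀ s ∈ Set.Icc a b, 0 ≤ u s) (hv0 : ∀ s ∈ Set.Icc a b, 0 < v s)
    (hdom : ∀ x ∈ Set.Icc a b, |y x| ≤ ∫ t in a..x, Φ x t * |h t|)
    (α β : ℝ) (hα : 0 < α) (hα2 : α < 2) (hβ : 0 < β)
    (x : ℝ) (hx : x ∈ Set.Icc a b) :
    ∫ s in a..x, u s * |y s| ^ β * |h s| ^ α ≤
      ((α / (α + β)) ^ (α / 2) *
        (∫ s in a..x, (u s ^ (2:ℝ) * v s ^ (-α)) ^ (1 / (2 - α)) *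
            (∫ t in a..s, v t ^ (-(1:ℝ)) * Φ s t ^ (2:ℝ)) ^ (β / (2 - α)))
          ^ ((2 - α) / 2)) *
      (∫ s in a..x, v s * |h s| ^ (2:ℝ)) ^ ((α + β) / 2) := by
  have hsub : Icc a x ⊆ Icc a b := Icc_subset_Icc_right hx.2
  have hsub' {s} (hs : s ∈ Icc a x) : Icc a s ⊆ Icc a b := Icc_subset_Icc_right (hs.2.trans hx.2)
  have hkernel : ContinuousOn (fun p : ℝ × ℝ => v p.2 ^ (-(1:ℝ)) * Φ p.1 p.2 ^ (2:ℝ))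
      (Icc a b ×ˢ Icc a b) :=
    ((hv.comp continuousOn_snd fun _ hp => hp.2).rpow_const fun _ hp =>
      .inl (hv0 _ hp.2).ne').mul (hΦc.rpow_const fun _ _ => .inr zero_le_two)
  refine weighted_opial_of_abs_le_sqrt_mul_sqrt hx.1 hα hα2 hβ (hy.mono hsub) (hh.mono hsub)
    (hu.mono hsub) (hv.mono hsub)
    ((continuousOn_parametric_primitive_of_continuousOn
      (k := fun s t => v t ^ (-(1:ℝ)) * Φ s t ^ (2:ℝ)) hkernel).mono hsub)
    (fun s hs => hu0 s (hsub hs)) (fun s hs => hv0 s (hsub hs))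
    (fun s hs => integral_nonneg hs.1 fun t ht => ?_) fun s hs => (hdom s (hsub hs)).trans ?_
  · have := hv0 t (hsub' hs ht)
    have := hΦ0 s (hsub hs) t (hsub' hs ht)
    positivity
  · exact integral_mul_le_weighted_L2_mul_L2 hs.1
      (hΦc.comp (continuousOn_const.prodMk continuousOn_id) fun t ht => ⟨hsub hs, hsub' hs ht⟩)
      (hh.abs.mono (hsub' hs)) (hv.mono (hsub' hs)) (fun t ht => hΦ0 s (hsub hs) t (hsub' hs ht))
      (fun _ _ => abs_nonneg _) fun t ht => hv0 t (hsub' hs ht)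

/-- Weighted Opial inequality for general kernels, specialization `r = 2`. -/
theorem weighted_opial_general_kernel_r_two (a b : ℝ) (hab : a ≤ b)
    (Φ : ℝ → ℝ → ℝ)
    (hΦc : ContinuousOn (fun p : ℝ × ℝ => Φ p.1 p.2) (Set.Icc a b ×ˢ Set.Icc a b))
    (hΦ0 : ∀ s ∈ Set.Icc a b, ∀ t ∈ Set.Icc a b, 0 ≤ Φ s t)
    (y h u v : ℝ → ℝ)
    (hy : ContinuousOn y (Set.Icc a b)) (hh : ContinuousOn h (Set.Icc a b))
    (hu : ContinuousOn u (Set.Icc a b)) (hv : ContinuousOn v (Set.Icc a b))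
    (hu0 : ∀ s ∈ Set.Icc a b, 0 ≤ u s) (hv0 : ∀ s ∈ Set.Icc a b, 0 < v s)
    (hdom : ∀ x ∈ Set.Icc a b, |y x| ≤ ∫ t in a..x, Φ x t * |h t|)
    (α β : ℝ) (hα : 0 < α) (hα2 : α < 2) (hβ : 0 < β)
    (x : ℝ) (hx : x ∈ Set.Icc a b) :
    ∫ s in a..x, u s * |y s| ^ β * |h s| ^ α ≤
      ((α / (α + β)) ^ (α / 2) *
        (∫ s in a..x, (u s ^ (2:ℝ) * v s ^ (-α)) ^ (1 / (2 - α)) *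
            (∫ t in a..s, v t ^ (-(1:ℝ)) * Φ s t ^ (2:ℝ)) ^ (β / (2 - α)))
          ^ ((2 - α) / 2)) *
      (∫ s in a..x, v s * |h s| ^ (2:ℝ)) ^ ((α + β) / 2) :=
  weighted_opial_general_kernel_r_two_general a b Φ hΦc hΦ0 y h u v hy hh hu hv hu0 hv0 hdom α β hα
    hα2 hβ x hx
end

section
/- Widder–Taylor formula: Let f, u₀, u₁, …, uₙ ∈ C^{n+1}([a,b]) with all Wronskians W₀(x), W₁(x), …, Wₙ(x) > 0 on [a,b]. Then for all x, t ∈ [a,b], f(x) = f(t)·u₀(x)/u₀(t) + Σ_{i=1}^{n} L_i f(t) g_i(x,t) + ∫ₜˣ gₙ(x,s) L_{n+1} f(s) ds, where L_i f(x) = W[u₀,…,u_{i-1},f](x)/W_{i-1}(x) is the Widder derivative and g_i(x,t) is the associated kernel (determinant with last row (u₀(x),…,u_i(x)) divided by W_i(t)). -/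
/-!
Set `Ψₖ(s) = Lₖ f(s) gₖ(x,s)`. Then `Ψ₀' = g₀ L₁ f`, and for `k ≥ 1`,
`Ψₖ' = gₖ Lₖ₊₁ f - gₖ₋₁ Lₖ f` with `Ψₖ(x) = 0` (the last row of the determinant `gₖ(x,x)` repeats
its first row). Integrating from `t` to `x` and telescoping gives the formula.

Differentiating a Wronskian-type determinant only changes its last non-constant row, since every
other differentiated row repeats the next one. The derivative identity for `Ψₖ` then reduces to two
Sylvester-type identities between these determinants, and both are instances of the three-term
Plücker relation for determinants that share all rows but two: a row that is a unit vector cuts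
out a smaller Wronskian as a minor.
-/

open intervalIntegral

/-- The Wronskian `W[u₀,…,uₙ](x)` of the functions `u 0, …, u n`. -/
noncomputable def wronskian (n : ℕ) (u : ℕ → ℝ → ℝ) (x : ℝ) : ℝ :=
  Matrix.det (Matrix.of fun j k : Fin (n + 1) => iteratedDeriv (j : ℕ) (u (k : ℕ)) x)

/-- The Widder derivative `L_i f(x) = W[u₀,…,u_{i-1},f](x) / W_{i-1}(x)`, with `L_0 f = f`. -/
noncomputable def widderL (i : ℕ) (u : ℕ → ℝ → ℝ) (f : ℝ → ℝ) (x : ℝ) : ℝ :=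
  match i with
  | 0 => f x
  | m + 1 =>
      Matrix.det (Matrix.of fun j k : Fin (m + 2) =>
        if (k : ℕ) = m + 1 then iteratedDeriv (j : ℕ) f x
        else iteratedDeriv (j : ℕ) (u (k : ℕ)) x) / wronskian m u x

/-- The Widder kernel `g_i(x,t)`: for `i ≥ 1` it is the determinant of the matrix whose
rows `j = 0,…,i-1` are `(u₀^{(j)}(t),…,u_i^{(j)}(t))` and whose last row is
`(u₀(x),…,u_i(x))`, divided by `W_i(t)`; and `g_0(x,t) = u₀(x)/u₀(t)`. -/
noncomputable def widderG (i : ℕ) (u : ℕ → ℝ → ℝ) (x t : ℝ) : ℝ :=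
  match i with
  | 0 => u 0 x / u 0 t
  | m + 1 =>
      Matrix.det (Matrix.of fun j k : Fin (m + 2) =>
        if (j : ℕ) = m + 1 then u (k : ℕ) x
        else iteratedDeriv (j : ℕ) (u (k : ℕ)) t) / wronskian (m + 1) u t


namespace Matrix

section Derivative

variable {ι 𝕜 : Type*} [Fintype ι] [DecidableEq ι] [NontriviallyNormedField 𝕜]

theorem hasDerivAt_det {M : 𝕜 → Matrix ι ι 𝕜} {M' : Matrix ι ι 𝕜} {x : 𝕜}
    (hM : ∀ i j, HasDerivAt (fun t => M t i j) (M' i j) x) :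
    HasDerivAt (fun t => (M t).det) (∑ i, ((M x).updateRow i (M' i)).det) x := by
  let detCML : ContinuousMultilinearMap 𝕜 (fun _ : ι => ι → 𝕜) 𝕜 :=
    { toMultilinearMap := (detRowAlternating : (ι → 𝕜) [⋀^ι]→ₗ[𝕜] 𝕜).toMultilinearMap
      cont := continuous_id.matrix_det }
  have hrows : HasDerivAt (fun t => (M t : ι → ι → 𝕜)) M' x :=
    hasDerivAt_pi.2 fun i => hasDerivAt_pi.2 fun j => hM i j
  exact ((detCML.hasFDerivAt (M x)).comp_hasDerivAt x hrows).congr_deriv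
    ((detCML.linearDeriv_apply _ _).trans rfl)

theorem hasDerivAt_det_of_degenerate_rows {M : 𝕜 → Matrix ι ι 𝕜} {M' : Matrix ι ι 𝕜} {x : 𝕜}
    (hM : ∀ i j, HasDerivAt (fun t => M t i j) (M' i j) x) (r : ι)
    (hdeg : ∀ i ≠ r, M' i = 0 ∨ ∃ i' ≠ i, M' i = M x i') :
    HasDerivAt (fun t => (M t).det) ((M x).updateRow r (M' r)).det x := by
  refine (hasDerivAt_det hM).congr_deriv (Finset.sum_eq_single r (fun i _ hi => ?_) (by simp))
  rcases hdeg i hi with h | ⟨i', hi', h⟩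
  · rw [h]
    exact det_eq_zero_of_row_eq_zero i (by simp)
  · rw [h]
    exact det_updateRow_eq_zero hi'

end Derivative

section Plucker

variable {ι : Type*} [Fintype ι] [DecidableEq ι]

theorem det_updateRow_updateRow_swap {R : Type*} [CommRing R] (A : Matrix ι ι R) {p q : ι}
    (hpq : p ≠ q) (a b : ι → R) :
    ((A.updateRow p a).updateRow q b).det = -((A.updateRow p b).updateRow q a).det := by
  have h : ((A.updateRow p a).updateRow q b).submatrix (Equiv.swap p q) id
      = (A.updateRow p b).updateRow q a := by
    ext i j
    rcases eq_or_ne i p with rfl | hip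
    · simp [hpq]
    rcases eq_or_ne i q with rfl | hiq
    · simp [hpq]
    · simp [Equiv.swap_apply_of_ne_of_ne hip hiq, hip, hiq]
  rw [← h, det_permute, Equiv.Perm.sign_swap hpq]
  simp

variable {K : Type*} [Field K]

theorem eq_zero_of_forall_apply_row_eq_zero {M : Matrix ι ι K} (hM : M.det ≠ 0)
    (Λ : (ι → K) →ₗ[K] K) (h : ∀ i, Λ (M i) = 0) : Λ = 0 := by
  refine LinearMap.ext fun w => ?_
  obtain ⟨c, rfl⟩ := vecMul_surjective_iff_isUnit.2 ((isUnit_iff_isUnit_det M).2 hM.isUnit) w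
  simp [vecMul_eq_sum, h]

theorem det_updateRow_updateRow_plucker (A : Matrix ι ι K) {p q : ι} (hpq : p ≠ q)
    (v₀ v₁ v₂ v₃ : ι → K) :
    ((A.updateRow p v₁).updateRow q v₂).det * ((A.updateRow p v₀).updateRow q v₃).det
      - ((A.updateRow p v₀).updateRow q v₂).det * ((A.updateRow p v₁).updateRow q v₃).det
      + ((A.updateRow p v₀).updateRow q v₁).det * ((A.updateRow p v₂).updateRow q v₃).det
      = 0 := by
  set D : (ι → K) → (ι → K) → K := fun a b => ((A.updateRow p a).updateRow q b).det
  have hself a : D a a = 0 := det_zero_of_row_eq hpq (by simp [hpq])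
  have hanti a b : D a b = -D b a := det_updateRow_updateRow_swap A hpq a b
  let L (a : ι → K) : (ι → K) →ₗ[K] K :=
    (detRowAlternating : (ι → K) [⋀^ι]→ₗ[K] K).toMultilinearMap.toLinearMap (A.updateRow p a) q
  let F : (ι → K) →ₗ[K] K := D v₁ v₂ • L v₀ - D v₀ v₂ • L v₁ + D v₀ v₁ • L v₂
  have hF w : F w = D v₁ v₂ * D v₀ w - D v₀ v₂ * D v₁ w + D v₀ v₁ * D v₂ w := rfl
  have hF₀ : F v₀ = 0 := by rw [hF, hself, hanti v₁ v₀, hanti v₂ v₀]; ring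
  have hF₁ : F v₁ = 0 := by rw [hF, hself, hanti v₂ v₁]; ring
  have hF₂ : F v₂ = 0 := by rw [hF, hself]; ring
  -- If `D a b ≠ 0`, the rows of `A` other than `p`, `q` together with `a`, `b` form a basis,
  -- and `F` vanishes on all of them.
  have hF_eq_zero a b (ha : F a = 0) (hb : F b = 0) (hab : D a b ≠ 0) : F = 0 := by
    refine eq_zero_of_forall_apply_row_eq_zero hab F fun i => ?_
    rcases eq_or_ne i q with rfl | hiq
    · simpa using hb
    rcases eq_or_ne i p with rfl | hip
    · simpa [hpq] using ha
    have hrow c : D c (A i) = 0 := det_zero_of_row_eq hiq (by simp [hip, hiq])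
    simp only [ne_eq, hiq, not_false_eq_true, updateRow_ne, hip]
    rw [hF, hrow, hrow, hrow]
    ring
  rw [← hF v₃]
  by_cases h₀₁ : D v₀ v₁ = 0
  · by_cases h₀₂ : D v₀ v₂ = 0
    · by_cases h₁₂ : D v₁ v₂ = 0
      · simp [hF, h₀₁, h₀₂, h₁₂]
      · rw [hF_eq_zero v₁ v₂ hF₁ hF₂ h₁₂, LinearMap.zero_apply]
    · rw [hF_eq_zero v₀ v₂ hF₀ hF₂ h₀₂, LinearMap.zero_apply]
  · rw [hF_eq_zero v₀ v₁ hF₀ hF₁ h₀₁, LinearMap.zero_apply]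

end Plucker

section Minors

variable {R : Type*} [CommRing R] {n : ℕ}

theorem det_updateRow_last_single (A : Matrix (Fin (n + 1)) (Fin (n + 1)) R) (i : Fin (n + 1)) :
    (A.updateRow (Fin.last n) (Pi.single i 1)).det
      = (-1) ^ (n + i : ℕ) * (A.submatrix Fin.castSucc i.succAbove).det := by
  rw [← adjugate_apply, adjugate_fin_succ_eq_det_submatrix, Fin.succAbove_last, Fin.val_last]

theorem det_updateRow_last_single_last (A : Matrix (Fin (n + 1)) (Fin (n + 1)) R) :
    (A.updateRow (Fin.last n) (Pi.single (Fin.last n) 1)).det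
      = (A.submatrix Fin.castSucc Fin.castSucc).det := by
  rw [det_updateRow_last_single, Fin.succAbove_last, Fin.val_last, ← two_mul, pow_mul]
  simp

theorem submatrix_castSucc_updateRow_castSucc {α : Type*} {m l : ℕ}
    (M : Matrix (Fin (n + 1)) (Fin m) α) (i : Fin n) (v : Fin m → α) (σ : Fin l → Fin m) :
    (M.updateRow i.castSucc v).submatrix Fin.castSucc σ
      = (M.submatrix Fin.castSucc σ).updateRow i (v ∘ σ) := by
  ext a b
  by_cases h : a = i <;> simp [updateRow_apply, h]

end Minors

end Matrix

open Matrix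

theorem ContDiff.hasDerivAt_iteratedDeriv {𝕜 F : Type*} [NontriviallyNormedField 𝕜]
    [NormedAddCommGroup F] [NormedSpace 𝕜 F] {f : 𝕜 → F} {n : WithTop ℕ∞} (hf : ContDiff 𝕜 n f)
    {j : ℕ} (hj : (j : WithTop ℕ∞) < n) (x : 𝕜) :
    HasDerivAt (iteratedDeriv j f) (iteratedDeriv (j + 1) f x) x := by
  rw [iteratedDeriv_succ]
  exact (hf.differentiable_iteratedDeriv j hj x).hasDerivAt

theorem natCast_succ_add_one (k : ℕ) : ((k + 1 : ℕ) : WithTop ℕ∞) + 1 = k + 2 := by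
  push_cast
  ring

theorem natCast_add_one_le_add_two (k : ℕ) : (k : WithTop ℕ∞) + 1 ≤ k + 2 := by
  gcongr
  norm_num

noncomputable def wronskianRow (k : ℕ) (φ : ℕ → ℝ → ℝ) (j : ℕ) (x : ℝ) : Fin k → ℝ :=
  fun c => iteratedDeriv j (φ c) x

noncomputable def wronskianMatrix (k : ℕ) (φ : ℕ → ℝ → ℝ) (x : ℝ) : Matrix (Fin k) (Fin k) ℝ :=
  of fun j => wronskianRow k φ j x

theorem wronskian_eq_det (n : ℕ) (φ : ℕ → ℝ → ℝ) (x : ℝ) :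
    wronskian n φ x = (wronskianMatrix (n + 1) φ x).det := rfl

theorem wronskian_zero (φ : ℕ → ℝ → ℝ) (x : ℝ) : wronskian 0 φ x = φ 0 x := by
  simp [wronskian]

theorem wronskian_one (φ : ℕ → ℝ → ℝ) (x : ℝ) :
    wronskian 1 φ x = φ 0 x * deriv (φ 1) x - φ 1 x * deriv (φ 0) x := by
  simp [wronskian, det_fin_two]

theorem wronskianRow_comp {n m : ℕ} {φ ψ : ℕ → ℝ → ℝ} {σ : Fin n → Fin m}
    (h : ∀ c : Fin n, φ (σ c) = ψ c) (j : ℕ) (x : ℝ) :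
    wronskianRow m φ j x ∘ σ = wronskianRow n ψ j x := by
  ext c
  simp [wronskianRow, h]

theorem wronskianMatrix_submatrix_castSucc {n : ℕ} {φ ψ : ℕ → ℝ → ℝ} {σ : Fin n → Fin (n + 1)}
    (h : ∀ c : Fin n, φ (σ c) = ψ c) (x : ℝ) :
    (wronskianMatrix (n + 1) φ x).submatrix Fin.castSucc σ = wronskianMatrix n ψ x := by
  ext j c
  simp [wronskianMatrix, wronskianRow, h]

theorem wronskianMatrix_updateRow_self {n : ℕ} (φ : ℕ → ℝ → ℝ) (x : ℝ) (i : Fin n) :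
    (wronskianMatrix n φ x).updateRow i (wronskianRow n φ i x) = wronskianMatrix n φ x :=
  updateRow_eq_self _ _

noncomputable def wronskianDeriv (n : ℕ) (φ : ℕ → ℝ → ℝ) (x : ℝ) : ℝ :=
  ((wronskianMatrix (n + 1) φ x).updateRow (Fin.last n) (wronskianRow (n + 1) φ (n + 1) x)).det

theorem hasDerivAt_wronskian {n : ℕ} {φ : ℕ → ℝ → ℝ} (hφ : ∀ c ≤ n, ContDiff ℝ (n + 1) (φ c))
    (x : ℝ) : HasDerivAt (wronskian n φ) (wronskianDeriv n φ x) x := by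
  refine hasDerivAt_det_of_degenerate_rows (M' := of fun j => wronskianRow (n + 1) φ (j + 1) x)
    (fun j c => (hφ c (Nat.lt_succ_iff.1 c.2)).hasDerivAt_iteratedDeriv ?_ x) (Fin.last n)
    fun j hj => Or.inr ⟨⟨j + 1, by simpa using Fin.val_lt_last hj⟩, by simp [Fin.ext_iff], rfl⟩
  exact_mod_cast j.2

theorem continuous_wronskian {n : ℕ} {φ : ℕ → ℝ → ℝ} (hφ : ∀ c ≤ n, ContDiff ℝ n (φ c)) :
    Continuous (wronskian n φ) := by
  refine (continuous_matrix fun (j c : Fin (n + 1)) => ?_).matrix_det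
  exact (hφ c (Nat.lt_succ_iff.1 c.2)).continuous_iteratedDeriv j
    (by exact_mod_cast Nat.lt_succ_iff.1 j.2)

theorem widderL_succ (k : ℕ) (u : ℕ → ℝ → ℝ) (f : ℝ → ℝ) (x : ℝ) :
    widderL (k + 1) u f x
      = wronskian (k + 1) (Function.update u (k + 1) f) x / wronskian k u x := by
  simp only [widderL, wronskian, Function.update_apply]
  congr 2
  ext j c
  simp only [of_apply]
  split_ifs <;> rfl

theorem contDiff_update_apply {m : WithTop ℕ∞} {k : ℕ} {u : ℕ → ℝ → ℝ} {f : ℝ → ℝ}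
    (hf : ContDiff ℝ m f) (hu : ∀ c ≤ k, ContDiff ℝ m (u c)) :
    ∀ c ≤ k + 1, ContDiff ℝ m (Function.update u (k + 1) f c) := by
  intro c hc
  rcases eq_or_ne c (k + 1) with rfl | hne
  · simpa using hf
  · rw [Function.update_of_ne hne]
    exact hu c (by omega)

noncomputable def widderKernelNum (k : ℕ) (u : ℕ → ℝ → ℝ) (x t : ℝ) : ℝ :=
  ((wronskianMatrix (k + 1) u t).updateRow (Fin.last k) (wronskianRow (k + 1) u 0 x)).det

theorem widderG_eq (k : ℕ) (u : ℕ → ℝ → ℝ) (x t : ℝ) :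
    widderG k u x t = widderKernelNum k u x t / wronskian k u t := by
  cases k with
  | zero => simp [widderG, widderKernelNum, wronskian, wronskianRow]
  | succ k =>
    simp only [widderG, widderKernelNum]
    congr 2
    ext j c
    simp [updateRow_apply, wronskianMatrix, wronskianRow, Fin.ext_iff]

theorem widderG_succ_self (k : ℕ) (u : ℕ → ℝ → ℝ) (x : ℝ) : widderG (k + 1) u x x = 0 := by
  rw [widderG_eq, widderKernelNum, det_zero_of_row_eq (Fin.castSucc_ne_last 0) (by simp; rfl),
    zero_div]

noncomputable def widderKernelNumDeriv (k : ℕ) (u : ℕ → ℝ → ℝ) (x t : ℝ) : ℝ :=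
  (((wronskianMatrix (k + 2) u t).updateRow (Fin.last k).castSucc
    (wronskianRow (k + 2) u (k + 1) t)).updateRow (Fin.last (k + 1))
      (wronskianRow (k + 2) u 0 x)).det

theorem hasDerivAt_widderKernelNum {k : ℕ} {u : ℕ → ℝ → ℝ}
    (hu : ∀ c ≤ k + 1, ContDiff ℝ (k + 1) (u c)) (x t : ℝ) :
    HasDerivAt (widderKernelNum (k + 1) u x) (widderKernelNumDeriv k u x t) t := by
  have hlast : (Fin.last k).castSucc ≠ Fin.last (k + 1) := Fin.castSucc_ne_last _
  have h := hasDerivAt_det_of_degenerate_rows (x := t)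
    (M := fun s => (wronskianMatrix (k + 2) u s).updateRow (Fin.last (k + 1))
      (wronskianRow (k + 2) u 0 x))
    (M' := fun j => if j = Fin.last (k + 1) then 0 else wronskianRow (k + 2) u (j + 1) t)
    (fun j c => ?_) (Fin.last k).castSucc (fun j hj => ?_)
  · rw [updateRow_comm _ hlast.symm, if_neg hlast] at h
    exact h
  · by_cases hj : j = Fin.last (k + 1)
    · simpa [hj] using hasDerivAt_const t _
    · simp only [hj, updateRow_apply, if_false]
      exact (hu c (Nat.lt_succ_iff.1 c.2)).hasDerivAt_iteratedDeriv
        (by exact_mod_cast Fin.val_lt_last hj) t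
  · by_cases hj' : j = Fin.last (k + 1)
    · exact Or.inl (if_pos hj')
    have hjk : (j : ℕ) < k := by
      have := Fin.val_lt_last hj'
      simp only [Ne, Fin.ext_iff, Fin.val_castSucc, Fin.val_last] at hj this
      omega
    refine Or.inr ⟨⟨j + 1, by omega⟩, by simp [Fin.ext_iff], ?_⟩
    rw [if_neg hj', updateRow_ne (by simp [Fin.ext_iff]; omega)]
    rfl

theorem continuous_widderKernelNum {k : ℕ} {u : ℕ → ℝ → ℝ} (hu : ∀ c ≤ k, ContDiff ℝ k (u c))
    (x : ℝ) : Continuous (widderKernelNum k u x) := by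
  refine (continuous_matrix fun j c => ?_).matrix_det
  simp only [updateRow_apply]
  split_ifs
  · exact continuous_const
  · exact (hu c (Nat.lt_succ_iff.1 c.2)).continuous_iteratedDeriv j
      (by exact_mod_cast Nat.lt_succ_iff.1 j.2)

-- Plücker relation for rows `k`, `k + 1` of the Wronskian matrix of `u₀, …, u_{k+1}` at `t`,
-- with `v₂` the row `(uᵢ(x))` and `v₃` the last unit vector.
theorem widderKernelNumDeriv_mul_wronskian (k : ℕ) (u : ℕ → ℝ → ℝ) (x t : ℝ) :
    widderKernelNumDeriv k u x t * wronskian k u t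
      - widderKernelNum (k + 1) u x t * wronskianDeriv k u t
      + wronskian (k + 1) u t * widderKernelNum k u x t = 0 := by
  set A := wronskianMatrix (k + 2) u t
  have h := det_updateRow_updateRow_plucker A (Fin.castSucc_ne_last (Fin.last k))
    (A (Fin.last k).castSucc) (A (Fin.last (k + 1))) (wronskianRow (k + 2) u 0 x)
    (Pi.single (Fin.last (k + 1)) 1)
  simp only [updateRow_eq_self, det_updateRow_last_single_last,
    submatrix_castSucc_updateRow_castSucc] at h
  exact h

theorem update_succAbove_castSucc_last (u : ℕ → ℝ → ℝ) (f : ℝ → ℝ) (k : ℕ) (c : Fin (k + 2)) :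
    Function.update u (k + 2) f ((Fin.last (k + 1)).castSucc.succAbove c)
      = Function.update u (k + 1) f c := by
  rcases Fin.eq_castSucc_or_eq_last c with ⟨c, rfl⟩ | rfl
  · rw [Fin.succAbove_of_castSucc_lt _ _ (Fin.castSucc_lt_castSucc_iff.2 (Fin.castSucc_lt_last c))]
    have := c.2
    rw [Fin.val_castSucc, Fin.val_castSucc, Function.update_of_ne (by omega),
      Function.update_of_ne (by omega)]
  · simp

-- Plücker relation for the last two rows of the Wronskian matrix of `u₀, …, u_{k+1}, f`, with
-- `v₂`, `v₃` the unit vectors of the columns of `u_{k+1}` and `f`.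
theorem wronskian_update_mul_wronskian (k : ℕ) (u : ℕ → ℝ → ℝ) (f : ℝ → ℝ) (x : ℝ) :
    wronskian (k + 2) (Function.update u (k + 2) f) x * wronskian k u x
      = wronskianDeriv (k + 1) (Function.update u (k + 1) f) x * wronskian (k + 1) u x
        - wronskianDeriv (k + 1) u x * wronskian (k + 1) (Function.update u (k + 1) f) x := by
  have hφ : ∀ c : Fin (k + 2), Function.update u (k + 2) f (Fin.castSucc c) = u c := fun c =>
    Function.update_of_ne (by simp only [Fin.val_castSucc]; omega) _ _
  have hsingle : (Pi.single (Fin.last (k + 1)).castSucc (1 : ℝ)) ∘ Fin.castSucc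
      = Pi.single (Fin.last (k + 1)) 1 := by
    ext c
    simp [Pi.single_apply, Fin.castSucc_inj]
  have hsign : (-1 : ℝ) ^ (k + 2 + ((Fin.last (k + 1)).castSucc : ℕ)) = -1 :=
    Odd.neg_one_pow ⟨k + 1, by simp; ring⟩
  have h := det_updateRow_updateRow_plucker
    (wronskianMatrix (k + 3) (Function.update u (k + 2) f) x)
    (Fin.castSucc_ne_last (Fin.last (k + 1)))
    (wronskianRow _ (Function.update u (k + 2) f) (Fin.last (k + 1)).castSucc x)
    (wronskianRow _ (Function.update u (k + 2) f) (Fin.last (k + 2)) x)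
    (Pi.single (Fin.last (k + 1)).castSucc 1) (Pi.single (Fin.last (k + 2)) 1)
  simp only [wronskianMatrix_updateRow_self, det_updateRow_last_single_last,
    submatrix_castSucc_updateRow_castSucc, wronskianMatrix_submatrix_castSucc hφ,
    wronskianRow_comp hφ, hsingle] at h
  simp only [det_updateRow_last_single, hsign, submatrix_castSucc_updateRow_castSucc,
    wronskianMatrix_submatrix_castSucc (update_succAbove_castSucc_last u f k),
    wronskianRow_comp (update_succAbove_castSucc_last u f k), Fin.val_last,
    wronskianMatrix_submatrix_castSucc (φ := u) (σ := Fin.castSucc) (fun _ => rfl)] at h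
  simp only [wronskian_eq_det, wronskianDeriv]
  linear_combination h

theorem continuousOn_widderG_mul_widderL {k : ℕ} {u : ℕ → ℝ → ℝ} {f : ℝ → ℝ} {S : Set ℝ}
    (hf : ContDiff ℝ (k + 1) f) (hu : ∀ c ≤ k, ContDiff ℝ (k + 1) (u c))
    (hW : ∀ s ∈ S, wronskian k u s ≠ 0) (x : ℝ) :
    ContinuousOn (fun s => widderG k u x s * widderL (k + 1) u f s) S := by
  have hu' : ∀ c ≤ k, ContDiff ℝ k (u c) := fun c hc => (hu c hc).of_le le_self_add
  have hW' := (continuous_wronskian hu').continuousOn (s := S)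
  simp only [widderG_eq, widderL_succ]
  refine ((continuous_widderKernelNum hu' x).continuousOn.div hW' hW).mul
    ((continuous_wronskian ?_).continuousOn.div hW' hW)
  push_cast
  exact contDiff_update_apply hf hu

theorem hasDerivAt_widderL_succ_mul_widderG_succ {k : ℕ} {u : ℕ → ℝ → ℝ} {f : ℝ → ℝ}
    (hf : ContDiff ℝ (k + 2) f) (hu : ∀ c ≤ k + 1, ContDiff ℝ (k + 2) (u c)) {x s : ℝ}
    (hW₀ : wronskian k u s ≠ 0) (hW₁ : wronskian (k + 1) u s ≠ 0) :
    HasDerivAt (fun τ => widderL (k + 1) u f τ * widderG (k + 1) u x τ)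
      (widderG (k + 1) u x s * widderL (k + 2) u f s
        - widderG k u x s * widderL (k + 1) u f s) s := by
  have hA := hasDerivAt_wronskian (n := k + 1) (φ := Function.update u (k + 1) f)
    (natCast_succ_add_one k ▸ contDiff_update_apply hf fun c hc => hu c (by omega)) s
  have hW₀' := hasDerivAt_wronskian (n := k) (φ := u)
    (fun c hc => (hu c (by omega)).of_le (natCast_add_one_le_add_two k)) s
  have hW₁' := hasDerivAt_wronskian (n := k + 1) (φ := u) (natCast_succ_add_one k ▸ hu) s
  have hN := hasDerivAt_widderKernelNum (k := k) (u := u)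
    (fun c hc => (hu c hc).of_le (natCast_add_one_le_add_two k)) x s
  have J₁ := wronskian_update_mul_wronskian k u f s
  have J₂ := widderKernelNumDeriv_mul_wronskian k u x s
  simp only [widderL_succ, widderG_eq, show k + 1 + 1 = k + 2 from rfl]
  refine ((hA.fun_div hW₀' hW₀).fun_mul (hN.fun_div hW₁' hW₁)).congr_deriv ?_
  field_simp
  linear_combination
    (wronskian (k + 1) (Function.update u (k + 1) f) s * wronskian (k + 1) u s) * J₂
      - (widderKernelNum (k + 1) u x s * wronskian k u s) * J₁

theorem integral_widderG_mul_widderL_succ {k : ℕ} {u : ℕ → ℝ → ℝ} {f : ℝ → ℝ}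
    (hf : ContDiff ℝ (k + 2) f) (hu : ∀ c ≤ k + 1, ContDiff ℝ (k + 2) (u c)) {x t : ℝ}
    (hW₀ : ∀ s ∈ Set.uIcc t x, wronskian k u s ≠ 0)
    (hW₁ : ∀ s ∈ Set.uIcc t x, wronskian (k + 1) u s ≠ 0) :
    ∫ s in t..x, widderG k u x s * widderL (k + 1) u f s
      = widderL (k + 1) u f t * widderG (k + 1) u x t
        + ∫ s in t..x, widderG (k + 1) u x s * widderL (k + 2) u f s := by
  have hint₀ := (continuousOn_widderG_mul_widderL (hf.of_le (natCast_add_one_le_add_two k))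
    (fun c hc => (hu c (by omega)).of_le (natCast_add_one_le_add_two k)) hW₀ x).intervalIntegrable
    (μ := MeasureTheory.volume)
  have hint₁ := (continuousOn_widderG_mul_widderL (natCast_succ_add_one k ▸ hf)
    (natCast_succ_add_one k ▸ hu) hW₁ x).intervalIntegrable (μ := MeasureTheory.volume)
  have hFTC := integral_eq_sub_of_hasDerivAt
    (fun s hs => hasDerivAt_widderL_succ_mul_widderG_succ hf hu (hW₀ s hs) (hW₁ s hs))
    (hint₁.sub hint₀)
  rw [integral_sub hint₁ hint₀, widderG_succ_self, mul_zero] at hFTC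
  linarith

theorem integral_widderG_zero_mul_widderL_one {u : ℕ → ℝ → ℝ} {f : ℝ → ℝ}
    (hf : ContDiff ℝ 1 f) (hu : ContDiff ℝ 1 (u 0)) {x t : ℝ}
    (hu₀ : ∀ s ∈ Set.uIcc t x, u 0 s ≠ 0) :
    ∫ s in t..x, widderG 0 u x s * widderL 1 u f s = f x - f t * (u 0 x / u 0 t) := by
  have hW : ∀ s ∈ Set.uIcc t x, wronskian 0 u s ≠ 0 := by simpa [wronskian_zero] using hu₀
  have hint := (continuousOn_widderG_mul_widderL (k := 0) (by simpa using hf)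
    (fun c hc => by simpa [Nat.le_zero.1 hc] using hu) hW x).intervalIntegrable
    (μ := MeasureTheory.volume)
  have hderiv : ∀ s ∈ Set.uIcc t x, HasDerivAt (fun τ => f τ * (u 0 x / u 0 τ))
      (widderG 0 u x s * widderL 1 u f s) s := by
    intro s hs
    have hf' := (hf.differentiable one_ne_zero s).hasDerivAt
    have hu' := (hu.differentiable one_ne_zero s).hasDerivAt
    refine (hf'.fun_mul ((hasDerivAt_const s (u 0 x)).fun_div hu' (hu₀ s hs))).congr_deriv ?_
    simp [widderG, widderL_succ, wronskian_one, wronskian_zero]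
    field_simp
    ring
  rw [integral_eq_sub_of_hasDerivAt hderiv hint, div_self (hu₀ x Set.right_mem_uIcc), mul_one]

theorem widder_taylor_general (a b : ℝ) (n : ℕ) (f : ℝ → ℝ) (u : ℕ → ℝ → ℝ)
    (hf : ContDiff ℝ (n + 1) f) (hu : ∀ i ≤ n, ContDiff ℝ (n + 1) (u i))
    (hW : ∀ i ≤ n, ∀ x ∈ Set.Icc a b, 0 < wronskian i u x)
    (x t : ℝ) (hx : x ∈ Set.Icc a b) (ht : t ∈ Set.Icc a b) :
    f x = f t * (u 0 x / u 0 t)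
        + ∑ i ∈ Finset.Icc 1 n, widderL i u f t * widderG i u x t
        + ∫ s in t..x, widderG n u x s * widderL (n + 1) u f s := by
  have hW' : ∀ i ≤ n, ∀ s ∈ Set.uIcc t x, wronskian i u s ≠ 0 :=
    fun i hi s hs => (hW i hi s (Set.uIcc_subset_Icc ht hx hs)).ne'
  induction n with
  | zero =>
    have hu₀ : ∀ s ∈ Set.uIcc t x, u 0 s ≠ 0 := by simpa [wronskian_zero] using hW' 0 le_rfl
    rw [integral_widderG_zero_mul_widderL_one (by simpa using hf) (by simpa using hu 0 le_rfl) hu₀]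
    simp
  | succ k ih =>
    rw [natCast_succ_add_one] at hf
    simp only [natCast_succ_add_one] at hu
    have hle := natCast_add_one_le_add_two k
    rw [ih (hf.of_le hle) (fun i hi => (hu i (by omega)).of_le hle)
        (fun i hi => hW i (by omega)) (fun i hi => hW' i (by omega)),
      integral_widderG_mul_widderL_succ hf hu (hW' k (by omega)) (hW' (k + 1) le_rfl),
      Finset.sum_Icc_succ_top (by omega)]
    ring

/-- Widder–Taylor formula. -/
theorem widder_taylor (a b : ℝ) (hab : a ≤ b) (n : ℕ) (f : ℝ → ℝ) (u : ℕ → ℝ → ℝ)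
    (hf : ContDiff ℝ (n + 1) f) (hu : ∀ i ≤ n, ContDiff ℝ (n + 1) (u i))
    (hW : ∀ i ≤ n, ∀ x ∈ Set.Icc a b, 0 < wronskian i u x)
    (x t : ℝ) (hx : x ∈ Set.Icc a b) (ht : t ∈ Set.Icc a b) :
    f x = f t * (u 0 x / u 0 t)
        + ∑ i ∈ Finset.Icc 1 n, widderL i u f t * widderG i u x t
        + ∫ s in t..x, widderG n u x s * widderL (n + 1) u f s :=
  widder_taylor_general a b n f u hf hu hW x t hx ht
end
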